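/- Truncation error of SVD-STP: with A = U⋉Σ⋉Vᵀ the SVD-STP of A, Σ = blkdiag(S₁,…,S_p), U_r, V_r the first r columns of U, V, and Σ_r = blkdiag(S₁,…,S_r), the Frobenius norm of the discarded part satisfies ‖U⋉Σ⋉Vᵀ − U_r⋉Σ_r⋉V_rᵀ‖_F = √(Σ_{i=r+1}^p ‖Sᵢ‖_F²). -/

import Mathlib

/-!
Writing `U_r = U ∘ castLE` and `V_r = V ∘ castLE`, the truncated product is `U ⋉ Σ' ⋉ Vᵀ`
where `Σ'` keeps only the first `r` blocks, so the discarded part is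
`(U ⊗ I) · blkdiag(0, …, 0, S_{r+1}, …, S_p) · (V ⊗ I)ᵀ`. The Kronecker factors have orthonormal
columns, so the Frobenius norm is that of the block-diagonal middle factor, whose square is the
sum of the squared block norms.
-/

open Matrix Kronecker

/-- The Frobenius norm of a real matrix. -/
noncomputable def frob {α β : Type*} [Fintype α] [Fintype β] (M : Matrix α β ℝ) : ℝ :=
  Real.sqrt (∑ i, ∑ j, (M i j) ^ 2)

/-- The Van Loan–Pitsianis rearrangement `Ã` of a matrix `A ∈ ℝ^{m₁m₂×n₁n₂}` (rows
indexed by `(i,a) : Fin m₁ × Fin m₂`, columns by `(j,b) : Fin n₁ × Fin n₂`, so the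
`(i,j)` block of size `m₂×n₂` is `A_{i,j}(a,b) = A (i,a) (j,b)`): the `((j-1)m₁+i)`-th
row of `Ã` is `vec(A_{i,j})ᵀ`, where `vec` is column-major. -/
def rearrange {m₁ m₂ n₁ n₂ : ℕ} (A : Matrix (Fin m₁ × Fin m₂) (Fin n₁ × Fin n₂) ℝ) :
    Matrix (Fin n₁ × Fin m₁) (Fin n₂ × Fin m₂) ℝ :=
  Matrix.of fun x y => A (x.2, y.2) (x.1, y.1)

/-- The rectangular block-diagonal matrix `blkdiag(S₁,…,S_p) ∈ ℝ^{p₁s₁×p₂s₂}` obtained by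
aligning the `s₁×s₂` blocks `S₁,…,S_p` along the diagonal (all other blocks zero). -/
noncomputable def blkdiag {s₁ s₂ : ℕ} (p₁ p₂ p : ℕ)
    (S : Fin p → Matrix (Fin s₁) (Fin s₂) ℝ) :
    Matrix (Fin p₁ × Fin s₁) (Fin p₂ × Fin s₂) ℝ :=
  Matrix.of fun x y =>
    if h : (x.1 : ℕ) = (y.1 : ℕ) ∧ (x.1 : ℕ) < p then S ⟨x.1, h.2⟩ x.2 y.2 else 0

theorem Fin.sum_comp_castLE {M : Type*} [AddCommMonoid M] {p q : ℕ} (h : p ≤ q) (f : Fin q → M)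
    (hf : ∀ k : Fin q, p ≤ (k : ℕ) → f k = 0) :
    ∑ k : Fin p, f (Fin.castLE h k) = ∑ k, f k :=
  Fintype.sum_of_injective _ (Fin.castLE_injective h) _ _
    (fun k hk => hf k (by simpa [Fin.range_castLE] using hk)) fun _ => rfl

theorem Fin.sum_sub_sum_castLE {G : Type*} [AddCommGroup G] {r p : ℕ} (h : r ≤ p)
    (f : Fin p → G) :
    ∑ k, f k - ∑ k : Fin r, f (Fin.castLE h k) = ∑ k : Fin p, if r ≤ (k : ℕ) then f k else 0 := by
  have hlow : ∑ k : Fin r, f (Fin.castLE h k) = ∑ k : Fin p, if r ≤ (k : ℕ) then 0 else f k := by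
    rw [← Fin.sum_comp_castLE h _ fun k hk => if_pos hk]
    exact Finset.sum_congr rfl fun k _ => (if_neg (by simp)).symm
  rw [hlow, ← Finset.sum_sub_distrib]
  congr! 1 with k
  split_ifs <;> simp

theorem Fin.sum_sum_eq_sum_castLE {M : Type*} [AddCommMonoid M] {p q₁ q₂ : ℕ} (h₁ : p ≤ q₁)
    (h₂ : p ≤ q₂) (F : Fin q₁ → Fin q₂ → M)
    (hF : ∀ (k : Fin q₁) (l : Fin q₂), ¬((k : ℕ) = l ∧ (k : ℕ) < p) → F k l = 0) :
    ∑ k, ∑ l, F k l = ∑ k : Fin p, F (Fin.castLE h₁ k) (Fin.castLE h₂ k) := by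
  rw [← Fin.sum_comp_castLE h₁ _ fun k hk =>
    Finset.sum_eq_zero fun l _ => hF k l fun hkl => (hkl.2.not_ge hk)]
  refine Finset.sum_congr rfl fun k _ => Finset.sum_eq_single _ (fun l _ hl => hF _ _ ?_) (by simp)
  rintro ⟨hkl, -⟩
  exact hl (Fin.ext hkl.symm)

theorem sum_sq_eq_trace_transpose_mul {α β : Type*} [Fintype α] [Fintype β]
    (M : Matrix α β ℝ) : ∑ i, ∑ j, M i j ^ 2 = (Mᵀ * M).trace := by
  simp only [trace, diag, mul_apply, transpose_apply, sq]
  exact Finset.sum_comm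

theorem sq_frob {α β : Type*} [Fintype α] [Fintype β] (M : Matrix α β ℝ) :
    frob M ^ 2 = ∑ i, ∑ j, M i j ^ 2 :=
  Real.sq_sqrt (by positivity)

theorem frob_mul_mul_transpose {α β γ δ : Type*} [Fintype α] [Fintype β] [Fintype γ] [Fintype δ]
    [DecidableEq β] [DecidableEq δ] {Q : Matrix α β ℝ} {P : Matrix γ δ ℝ}
    (hQ : Qᵀ * Q = 1) (hP : Pᵀ * P = 1) (M : Matrix β δ ℝ) :
    frob (Q * M * Pᵀ) = frob M := by
  have hgram : (Q * M * Pᵀ)ᵀ * (Q * M * Pᵀ) = P * (Mᵀ * M) * Pᵀ := by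
    simp only [transpose_mul, transpose_transpose, Matrix.mul_assoc]
    rw [← Matrix.mul_assoc Qᵀ, hQ, Matrix.one_mul]
  rw [frob, frob, sum_sq_eq_trace_transpose_mul, sum_sq_eq_trace_transpose_mul, hgram,
    trace_mul_cycle, hP, Matrix.one_mul]

theorem kronecker_one_transpose_mul_self {R m n k : Type*} [CommSemiring R] [Fintype m]
    [Fintype k] [DecidableEq n] [DecidableEq k] {Q : Matrix m n R} (hQ : Qᵀ * Q = 1) :
    (Q ⊗ₖ (1 : Matrix k k R))ᵀ * (Q ⊗ₖ (1 : Matrix k k R)) = 1 := by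
  rw [← kroneckerMap_transpose, transpose_one, ← mul_kronecker_mul, hQ, Matrix.one_mul,
    one_kronecker_one]

section kronecker_one

variable {R : Type*} [CommSemiring R] {m n q s : Type*} [Fintype q] [Fintype s] [DecidableEq s]

theorem kronecker_one_mul_apply {ν : Type*} (W : Matrix m q R) (M : Matrix (q × s) ν R) (i : m)
    (a : s) (y : ν) : ((W ⊗ₖ (1 : Matrix s s R)) * M) (i, a) y = ∑ k, W i k * M (k, a) y := by
  simp [mul_apply, one_apply, Fintype.sum_prod_type]

theorem mul_transpose_kronecker_one_apply {μ : Type*} (M : Matrix μ (q × s) R) (X : Matrix n q R)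
    (x : μ) (j : n) (b : s) :
    (M * (X ⊗ₖ (1 : Matrix s s R))ᵀ) x (j, b) = ∑ l, M x (l, b) * X j l := by
  simp [mul_apply, one_apply, Fintype.sum_prod_type]

end kronecker_one

section blkdiag

variable {s₁ s₂ q₁ q₂ p : ℕ} (S : Fin p → Matrix (Fin s₁) (Fin s₂) ℝ)

theorem blkdiag_castLE_apply (h₁ : p ≤ q₁) (h₂ : p ≤ q₂) (k : Fin p) (a : Fin s₁)
    (b : Fin s₂) :
    blkdiag q₁ q₂ p S (Fin.castLE h₁ k, a) (Fin.castLE h₂ k, b) = S k a b := by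
  simp [blkdiag]

theorem blkdiag_apply_eq_zero {k : Fin q₁} {l : Fin q₂} (h : ¬((k : ℕ) = l ∧ (k : ℕ) < p))
    (a : Fin s₁) (b : Fin s₂) : blkdiag q₁ q₂ p S (k, a) (l, b) = 0 :=
  dif_neg h

theorem sq_frob_blkdiag (h₁ : p ≤ q₁) (h₂ : p ≤ q₂) :
    frob (blkdiag q₁ q₂ p S) ^ 2 = ∑ k, frob (S k) ^ 2 := by
  simp only [sq_frob, Fintype.sum_prod_type]
  calc _ = ∑ k, ∑ l, ∑ a, ∑ b, blkdiag q₁ q₂ p S (k, a) (l, b) ^ 2 :=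
        Finset.sum_congr rfl fun k _ => Finset.sum_comm
    _ = ∑ k, ∑ a, ∑ b, blkdiag q₁ q₂ p S (Fin.castLE h₁ k, a) (Fin.castLE h₂ k, b) ^ 2 :=
        Fin.sum_sum_eq_sum_castLE h₁ h₂ _ fun k l hkl => by simp [blkdiag_apply_eq_zero S hkl]
    _ = _ := by simp only [blkdiag_castLE_apply]

theorem frob_blkdiag (h₁ : p ≤ q₁) (h₂ : p ≤ q₂) :
    frob (blkdiag q₁ q₂ p S) = √(∑ k, frob (S k) ^ 2) := by
  rw [← sq_frob_blkdiag S h₁ h₂]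
  exact (Real.sqrt_sq (Real.sqrt_nonneg _)).symm

theorem kronecker_one_mul_blkdiag_mul_transpose_apply {m n : ℕ} (h₁ : p ≤ q₁) (h₂ : p ≤ q₂)
    (W : Matrix (Fin m) (Fin q₁) ℝ) (X : Matrix (Fin n) (Fin q₂) ℝ)
    (i : Fin m) (a : Fin s₁) (j : Fin n) (b : Fin s₂) :
    ((W ⊗ₖ (1 : Matrix (Fin s₁) (Fin s₁) ℝ)) * blkdiag q₁ q₂ p S *
        (X ⊗ₖ (1 : Matrix (Fin s₂) (Fin s₂) ℝ))ᵀ) (i, a) (j, b) =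
      ∑ k, W i (Fin.castLE h₁ k) * S k a b * X j (Fin.castLE h₂ k) := by
  simp_rw [mul_transpose_kronecker_one_apply, kronecker_one_mul_apply, Finset.sum_mul]
  rw [Finset.sum_comm, Fin.sum_sum_eq_sum_castLE h₁ h₂ _ fun k l hkl => by
    simp [blkdiag_apply_eq_zero S hkl]]
  simp only [blkdiag_castLE_apply]

theorem kronecker_one_mul_blkdiag_mul_transpose_sub_truncation {m n r : ℕ} (h₁ : p ≤ q₁)
    (h₂ : p ≤ q₂) (hr : r ≤ p) (W : Matrix (Fin m) (Fin q₁) ℝ) (X : Matrix (Fin n) (Fin q₂) ℝ)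
    (Wr : Matrix (Fin m) (Fin r) ℝ) (Xr : Matrix (Fin n) (Fin r) ℝ)
    (hWr : ∀ i k, Wr i k = W i (Fin.castLE (hr.trans h₁) k))
    (hXr : ∀ j k, Xr j k = X j (Fin.castLE (hr.trans h₂) k)) :
    (W ⊗ₖ (1 : Matrix (Fin s₁) (Fin s₁) ℝ)) * blkdiag q₁ q₂ p S *
          (X ⊗ₖ (1 : Matrix (Fin s₂) (Fin s₂) ℝ))ᵀ -
        (Wr ⊗ₖ (1 : Matrix (Fin s₁) (Fin s₁) ℝ)) * blkdiag r r r (fun k => S (Fin.castLE hr k)) *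
          (Xr ⊗ₖ (1 : Matrix (Fin s₂) (Fin s₂) ℝ))ᵀ =
      (W ⊗ₖ (1 : Matrix (Fin s₁) (Fin s₁) ℝ)) *
          blkdiag q₁ q₂ p (fun k => if r ≤ (k : ℕ) then S k else 0) *
          (X ⊗ₖ (1 : Matrix (Fin s₂) (Fin s₂) ℝ))ᵀ := by
  ext ⟨i, a⟩ ⟨j, b⟩
  rw [Matrix.sub_apply, kronecker_one_mul_blkdiag_mul_transpose_apply S h₁ h₂,
    kronecker_one_mul_blkdiag_mul_transpose_apply _ le_rfl le_rfl,
    kronecker_one_mul_blkdiag_mul_transpose_apply _ h₁ h₂]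
  simp only [hWr, hXr, Fin.castLE_refl]
  refine (Fin.sum_sub_sum_castLE hr
    fun k => W i (Fin.castLE h₁ k) * S k a b * X j (Fin.castLE h₂ k)).trans
    (Finset.sum_congr rfl fun k _ => ?_)
  by_cases hk : r ≤ (k : ℕ) <;> simp [hk]

end blkdiag

theorem svd_stp_truncation_error_general {p₁ s₁ p₂ s₂ r : ℕ}
    (hr : r ≤ min p₁ p₂)
    (U : Matrix (Fin p₁) (Fin p₁) ℝ) (V : Matrix (Fin p₂) (Fin p₂) ℝ)
    (hU : Uᵀ * U = 1) (hV : Vᵀ * V = 1)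
    (S : Fin (min p₁ p₂) → Matrix (Fin s₁) (Fin s₂) ℝ)
    (Ur : Matrix (Fin p₁) (Fin r) ℝ) (Vr : Matrix (Fin p₂) (Fin r) ℝ)
    (hUr : ∀ i j, Ur i j = U i (Fin.castLE (hr.trans (min_le_left _ _)) j))
    (hVr : ∀ i j, Vr i j = V i (Fin.castLE (hr.trans (min_le_right _ _)) j)) :
    frob
        ((U ⊗ₖ (1 : Matrix (Fin s₁) (Fin s₁) ℝ)) * blkdiag p₁ p₂ (min p₁ p₂) S *
            ((V ⊗ₖ (1 : Matrix (Fin s₂) (Fin s₂) ℝ)))ᵀ -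
          (Ur ⊗ₖ (1 : Matrix (Fin s₁) (Fin s₁) ℝ)) *
            blkdiag r r r (fun i => S (Fin.castLE hr i)) *
            ((Vr ⊗ₖ (1 : Matrix (Fin s₂) (Fin s₂) ℝ)))ᵀ) =
      Real.sqrt (∑ i ∈ Finset.univ.filter
        (fun i : Fin (min p₁ p₂) => r ≤ (i : ℕ)), frob (S i) ^ 2) := by
  rw [kronecker_one_mul_blkdiag_mul_transpose_sub_truncation S (min_le_left _ _)
      (min_le_right _ _) hr U V Ur Vr hUr hVr,
    frob_mul_mul_transpose (kronecker_one_transpose_mul_self hU)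
      (kronecker_one_transpose_mul_self hV),
    frob_blkdiag _ (min_le_left _ _) (min_le_right _ _), Finset.sum_filter]
  refine congrArg _ (Finset.sum_congr rfl fun k _ => ?_)
  by_cases hk : r ≤ (k : ℕ) <;> simp [hk, frob]

/-- truncation error of the SVD-STP: with `A = U ⋉ Σ ⋉ Vᵀ` the SVD-STP of
`A` (`U, V` orthogonal, `Σ = blkdiag(S₁,…,S_p)`, `p = min{p₁,p₂}`), `U_r, V_r` the first
`r` columns of `U, V`, and `Σ_r = blkdiag(S₁,…,S_r)`, the discarded part satisfies
`‖U ⋉ Σ ⋉ Vᵀ − U_r ⋉ Σ_r ⋉ V_rᵀ‖_F = √(∑_{i=r+1}^p ‖Sᵢ‖_F²)`. -/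
theorem svd_stp_truncation_error {p₁ s₁ p₂ s₂ r : ℕ}
    (hr : r ≤ min p₁ p₂)
    (U : Matrix (Fin p₁) (Fin p₁) ℝ) (V : Matrix (Fin p₂) (Fin p₂) ℝ)
    (hU : Uᵀ * U = 1) (hU' : U * Uᵀ = 1) (hV : Vᵀ * V = 1) (hV' : V * Vᵀ = 1)
    (S : Fin (min p₁ p₂) → Matrix (Fin s₁) (Fin s₂) ℝ)
    (hS : Antitone (fun i => frob (S i)))
    (Ur : Matrix (Fin p₁) (Fin r) ℝ) (Vr : Matrix (Fin p₂) (Fin r) ℝ)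
    (hUr : ∀ i j, Ur i j = U i (Fin.castLE (hr.trans (min_le_left _ _)) j))
    (hVr : ∀ i j, Vr i j = V i (Fin.castLE (hr.trans (min_le_right _ _)) j)) :
    frob
        ((U ⊗ₖ (1 : Matrix (Fin s₁) (Fin s₁) ℝ)) * blkdiag p₁ p₂ (min p₁ p₂) S *
            ((V ⊗ₖ (1 : Matrix (Fin s₂) (Fin s₂) ℝ)))ᵀ -
          (Ur ⊗ₖ (1 : Matrix (Fin s₁) (Fin s₁) ℝ)) *
            blkdiag r r r (fun i => S (Fin.castLE hr i)) *
            ((Vr ⊗ₖ (1 : Matrix (Fin s₂) (Fin s₂) ℝ)))ᵀ) =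
      Real.sqrt (∑ i ∈ Finset.univ.filter
        (fun i : Fin (min p₁ p₂) => r ≤ (i : ℕ)), frob (S i) ^ 2) :=
  svd_stp_truncation_error_general hr U V hU hV S Ur Vr hUr hVr
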